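/- arXiv:cond-mat/9907130 — 3 statements merged into one kernel-verified Lean document; each statement's English description precedes it below -/
import Mathlib

section
/- Let β > 0 and let U : ℝ × ℝ → ℝ be measurable and bounded, with U(a, b) = 0 whenever a, b ≥ 0 and a + b > 1/2. For n ∈ ℤ set k₀(n) = (2n+1)π/β. Then (1/β) · Σ_{n ∈ ℤ} ∫_{ℝ²} [ (i·k₀(n) + (‖k‖² - 1)) / (k₀(n)² + (‖k‖² - 1)²) ] · U(k₀(n)², (‖k‖² - 1)²) dk = 0; moreover only finitely many terms of the sum are nonzero and each integral is absolutely convergent. -/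
/-!
Under `n ↦ -1 - n` the Matsubara frequency changes sign, and the propagator
`(i k₀ + e)/(k₀² + e²)` is odd in the pair `(k₀, e)`; so the terms `n` and `-1 - n` add up to the
integral over `ℝ²` of an odd function of `e = ‖k‖² - 1`. In two dimensions the substitution
`t = ‖k‖² - 1` has constant Jacobian (`dk = π dt` on `t > -1`), and the cutoff confines `e` to
`|e| ≤ 1`, so that integral vanishes. The cutoff also forces `k₀² ≤ 1/2`, leaving finitely many
nonzero terms, and since `k₀ ≠ 0` the propagator is bounded by `1/|k₀|`, which with the compact
support gives integrability.
-/

open MeasureTheory Set Real Complex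

lemma tsum_eq_zero_of_apply_equiv_eq_neg {α ι : Type*} [AddCommGroup α] [TopologicalSpace α]
    [IsTopologicalAddGroup α] [T2Space α] [IsAddTorsionFree α] {f : ι → α} (e : ι ≃ ι)
    (h : ∀ i, f (e i) = -f i) : ∑' i, f i = 0 := by
  rw [← self_eq_neg, ← tsum_neg, ← e.tsum_eq]
  exact tsum_congr h

section Radial

variable {F : Type*} [NormedAddCommGroup F] [NormedSpace ℝ F]

lemma integral_Ioi_zero_smul_comp_sq_sub_one (g : ℝ → F) :
    ∫ y in Ioi (0 : ℝ), y • g (y ^ 2 - 1) = (1 / 2 : ℝ) • ∫ t in Ioi (-1 : ℝ), g t := by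
  have himage : (fun y : ℝ => y ^ 2 - 1) '' Ioi 0 = Ioi (-1) := by
    ext t
    refine ⟨?_, fun ht => ⟨√(t + 1), sqrt_pos.2 (by linarith [mem_Ioi.1 ht]), ?_⟩⟩
    · rintro ⟨y, hy, rfl⟩
      exact mem_Ioi.2 (by nlinarith [mem_Ioi.1 hy])
    · show √(t + 1) ^ 2 - 1 = t
      rw [sq_sqrt (by linarith [mem_Ioi.1 ht])]
      ring
  have hinj : InjOn (fun y : ℝ => y ^ 2 - 1) (Ioi 0) := fun a ha b hb hab =>
    (sq_eq_sq₀ (le_of_lt ha) (le_of_lt hb)).1 (sub_left_injective hab)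
  have hderiv : ∀ y ∈ Ioi (0 : ℝ), HasDerivWithinAt (fun y : ℝ => y ^ 2 - 1) (2 * y) (Ioi 0) y :=
    fun y _ => by simpa using ((hasDerivAt_pow 2 y).sub_const 1).hasDerivWithinAt
  rw [← himage, integral_image_eq_integral_abs_deriv_smul measurableSet_Ioi hderiv hinj,
    ← integral_smul]
  refine setIntegral_congr_fun measurableSet_Ioi fun y hy => ?_
  rw [abs_of_pos (by linarith [mem_Ioi.1 hy]), smul_smul]
  ring_nf

lemma integral_Ioi_neg_one_eq_zero_of_odd {g : ℝ → F} (hodd : ∀ t, g (-t) = -g t)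
    (hsupp : ∀ t < -1, g t = 0) : ∫ t in Ioi (-1 : ℝ), g t = 0 := by
  have : IsAddTorsionFree F := .of_isTorsionFree ℝ F
  have hline : ∫ t, g t = 0 := by
    rw [← self_eq_neg, ← integral_neg]
    simp_rw [← hodd]
    exact (integral_neg_eq_self g volume).symm
  rw [← hline, ← integral_Ici_eq_integral_Ioi]
  exact setIntegral_eq_integral_of_forall_compl_eq_zero fun t ht => hsupp t (not_le.1 ht)

lemma integral_comp_norm_sq_sub_one_eq_zero_of_odd {E : Type*} [NormedAddCommGroup E]
    [NormedSpace ℝ E] [MeasurableSpace E] [BorelSpace E] [FiniteDimensional ℝ E]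
    (hE : Module.finrank ℝ E = 2) (μ : Measure E) [μ.IsAddHaarMeasure] {g : ℝ → F}
    (hodd : ∀ t, g (-t) = -g t) (hsupp : ∀ t < -1, g t = 0) :
    ∫ x, g (‖x‖ ^ 2 - 1) ∂μ = 0 := by
  have : Nontrivial E := Module.nontrivial_of_finrank_eq_succ hE
  rw [integral_fun_norm_addHaar μ (fun y => g (y ^ 2 - 1)), hE]
  simp [integral_Ioi_zero_smul_comp_sq_sub_one, integral_Ioi_neg_one_eq_zero_of_odd hodd hsupp]

end Radial

lemma integrable_comp_norm_sq_sub_one {F E : Type*} [NormedAddCommGroup F] [NormedAddCommGroup E]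
    [NormedSpace ℝ E] [MeasurableSpace E] [BorelSpace E] [FiniteDimensional ℝ E] (μ : Measure E)
    [IsFiniteMeasureOnCompacts μ] {g : ℝ → F} {C : ℝ} (hg : StronglyMeasurable g)
    (hC : ∀ t, ‖g t‖ ≤ C) (hsupp : ∀ t, 1 < t → g t = 0) :
    Integrable (fun x => g (‖x‖ ^ 2 - 1)) μ := by
  have hsupport : Function.support (fun x : E => g (‖x‖ ^ 2 - 1)) ⊆ Metric.closedBall 0 2 := by
    intro x hx
    rw [mem_closedBall_zero_iff]
    by_contra! h
    exact hx (hsupp _ (by nlinarith))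
  rw [← integrableOn_iff_integrable_of_support_subset hsupport]
  exact Measure.integrableOn_of_bounded measure_closedBall_lt_top.ne
    (hg.comp_measurable ((measurable_norm.pow_const 2).sub_const 1)).aestronglyMeasurable
    (.of_forall fun x => hC _)

section Tadpole

variable {U : ℝ → ℝ → ℝ}

noncomputable def tadpoleIntegrand (U : ℝ → ℝ → ℝ) (a t : ℝ) : ℂ :=
  (I * a + t) / ((a ^ 2 + t ^ 2 : ℝ) : ℂ) * (U (a ^ 2) (t ^ 2) : ℂ)

lemma norm_propagator_le {a : ℝ} (ha : a ≠ 0) (t : ℝ) :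
    ‖(I * a + t) / ((a ^ 2 + t ^ 2 : ℝ) : ℂ)‖ ≤ |a|⁻¹ := by
  set z : ℂ := I * a + t
  have hz : a ^ 2 + t ^ 2 = ‖z‖ ^ 2 := by
    rw [← Complex.normSq_eq_norm_sq, Complex.normSq_apply]
    simp only [z, add_re, mul_re, I_re, ofReal_re, I_im, ofReal_im, add_im, mul_im]
    ring
  have him : |a| ≤ ‖z‖ := by simpa [z] using Complex.abs_im_le_norm z
  have hpos : 0 < ‖z‖ := (abs_pos.2 ha).trans_le him
  rw [hz, norm_div, Complex.norm_real, Real.norm_of_nonneg (by positivity), sq,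
    div_mul_cancel_left₀ hpos.ne']
  exact inv_anti₀ (abs_pos.2 ha) him

lemma tadpoleIntegrand_eq_zero (hUsupp : ∀ a b : ℝ, 0 ≤ a → 0 ≤ b → 1 / 2 < a + b → U a b = 0)
    {a t : ℝ} (h : 1 / 2 < a ^ 2 + t ^ 2) : tadpoleIntegrand U a t = 0 := by
  simp [tadpoleIntegrand, hUsupp _ _ (sq_nonneg a) (sq_nonneg t) h]

lemma norm_tadpoleIntegrand_le {M : ℝ} (hM : ∀ a b : ℝ, |U a b| ≤ M) {a : ℝ} (ha : a ≠ 0)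
    (t : ℝ) : ‖tadpoleIntegrand U a t‖ ≤ |a|⁻¹ * M := by
  rw [tadpoleIntegrand, norm_mul, Complex.norm_real, Real.norm_eq_abs]
  exact mul_le_mul (norm_propagator_le ha t) (hM _ _) (abs_nonneg _) (by positivity)

lemma measurable_tadpoleIntegrand (hU : Measurable (Function.uncurry U)) (a : ℝ) :
    Measurable (tadpoleIntegrand U a) := by
  unfold tadpoleIntegrand
  fun_prop

lemma tadpoleIntegrand_neg_neg (a t : ℝ) :
    tadpoleIntegrand U (-a) (-t) = -tadpoleIntegrand U a t := by
  simp only [tadpoleIntegrand, neg_sq]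
  push_cast
  ring

variable {E : Type*} [NormedAddCommGroup E] [NormedSpace ℝ E] [MeasurableSpace E] [BorelSpace E]
  [FiniteDimensional ℝ E] (μ : Measure E) [μ.IsAddHaarMeasure] {M : ℝ}

lemma integrable_tadpoleIntegrand (hUmeas : Measurable (Function.uncurry U))
    (hM : ∀ a b : ℝ, |U a b| ≤ M) (hUsupp : ∀ a b : ℝ, 0 ≤ a → 0 ≤ b → 1 / 2 < a + b → U a b = 0)
    {a : ℝ} (ha : a ≠ 0) :
    Integrable (fun x : E => tadpoleIntegrand U a (‖x‖ ^ 2 - 1)) μ :=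
  integrable_comp_norm_sq_sub_one μ (measurable_tadpoleIntegrand hUmeas a).stronglyMeasurable
    (norm_tadpoleIntegrand_le hM ha) fun t ht => tadpoleIntegrand_eq_zero hUsupp (by nlinarith)

lemma integral_tadpoleIntegrand_neg_add (hUmeas : Measurable (Function.uncurry U))
    (hM : ∀ a b : ℝ, |U a b| ≤ M) (hUsupp : ∀ a b : ℝ, 0 ≤ a → 0 ≤ b → 1 / 2 < a + b → U a b = 0)
    (hE : Module.finrank ℝ E = 2) {a : ℝ} (ha : a ≠ 0) :
    ∫ x, tadpoleIntegrand U (-a) (‖x‖ ^ 2 - 1) ∂μ + ∫ x, tadpoleIntegrand U a (‖x‖ ^ 2 - 1) ∂μ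
      = 0 := by
  rw [← integral_add (integrable_tadpoleIntegrand μ hUmeas hM hUsupp (neg_ne_zero.2 ha))
    (integrable_tadpoleIntegrand μ hUmeas hM hUsupp ha)]
  refine integral_comp_norm_sq_sub_one_eq_zero_of_odd hE μ
    (g := fun t => tadpoleIntegrand U (-a) t + tadpoleIntegrand U a t) (fun t => ?_)
    fun t ht => ?_
  · rw [tadpoleIntegrand_neg_neg, ← neg_neg a, tadpoleIntegrand_neg_neg, neg_neg]
    abel
  · rw [tadpoleIntegrand_eq_zero hUsupp (by nlinarith),
      tadpoleIntegrand_eq_zero hUsupp (by nlinarith), add_zero]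

end Tadpole

section Matsubara

variable {β : ℝ}

noncomputable def matsubaraFreq (β : ℝ) (n : ℤ) : ℝ := (2 * n + 1) * π / β

lemma matsubaraFreq_ne_zero (hβ : β ≠ 0) (n : ℤ) : matsubaraFreq β n ≠ 0 := by
  have h : (2 * n + 1 : ℝ) ≠ 0 := by exact_mod_cast (by omega : 2 * n + 1 ≠ 0)
  exact div_ne_zero (mul_ne_zero h pi_ne_zero) hβ

lemma matsubaraFreq_neg_one_sub (n : ℤ) : matsubaraFreq β (-1 - n) = -matsubaraFreq β n := by
  simp only [matsubaraFreq]
  push_cast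
  ring

lemma finite_setOf_abs_matsubaraFreq_le (hβ : β ≠ 0) (c : ℝ) :
    {n : ℤ | |matsubaraFreq β n| ≤ c}.Finite := by
  set N := ⌈c * |β| / π⌉
  refine (Set.finite_Icc (-N - 1) N).subset fun n (hn : |matsubaraFreq β n| ≤ c) => ?_
  have hn' : |2 * (n : ℝ) + 1| ≤ c * |β| / π := by
    rw [le_div_iff₀ pi_pos]
    rwa [matsubaraFreq, abs_div, abs_mul, abs_of_pos pi_pos,
      div_le_iff₀ (abs_pos.2 hβ)] at hn
  have hN := Int.le_ceil (c * |β| / π)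
  obtain ⟨hlo, hhi⟩ := abs_le.1 hn'
  constructor
  · exact_mod_cast (by push_cast; linarith : ((-N - 1 : ℤ) : ℝ) ≤ n)
  · exact_mod_cast (by linarith : (n : ℝ) ≤ N)

end Matsubara

/-- The tadpole lemma: with dispersion `e(k) = ‖k‖² - 1`, propagator
`(i k₀ + e(k))/(k₀² + e(k)²)` at Matsubara frequencies `k₀ = (2n+1)π/β`, and a band
cutoff `U[k₀², e²]` supported in `k₀² + e² ≤ 1/2`, the tadpole amplitude vanishes:
each spatial integral is absolutely convergent, only finitely many Matsubara terms are
nonzero, and the full sum is zero. -/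
theorem stmt2 (β : ℝ) (hβ : 0 < β) (U : ℝ → ℝ → ℝ)
    (hUmeas : Measurable (Function.uncurry U))
    (hUbdd : ∃ M : ℝ, ∀ a b : ℝ, |U a b| ≤ M)
    (hUsupp : ∀ a b : ℝ, 0 ≤ a → 0 ≤ b → 1 / 2 < a + b → U a b = 0)
    (k₀ : ℤ → ℝ) (hk₀ : ∀ n : ℤ, k₀ n = (2 * (n : ℝ) + 1) * Real.pi / β)
    (term : ℤ → ℂ)
    (hterm : ∀ n : ℤ, term n = ∫ k : EuclideanSpace ℝ (Fin 2),
        ((Complex.I * (k₀ n : ℂ) + ((‖k‖ ^ 2 - 1 : ℝ) : ℂ)) /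
            (((k₀ n) ^ 2 + (‖k‖ ^ 2 - 1) ^ 2 : ℝ) : ℂ)) *
          ((U ((k₀ n) ^ 2) ((‖k‖ ^ 2 - 1) ^ 2) : ℝ) : ℂ)) :
    (∀ n : ℤ, Integrable (fun k : EuclideanSpace ℝ (Fin 2) =>
        ((Complex.I * (k₀ n : ℂ) + ((‖k‖ ^ 2 - 1 : ℝ) : ℂ)) /
            (((k₀ n) ^ 2 + (‖k‖ ^ 2 - 1) ^ 2 : ℝ) : ℂ)) *
          ((U ((k₀ n) ^ 2) ((‖k‖ ^ 2 - 1) ^ 2) : ℝ) : ℂ))) ∧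
    {n : ℤ | term n ≠ 0}.Finite ∧
    (1 / (β : ℂ)) * ∑' n : ℤ, term n = 0 := by
  obtain ⟨M, hM⟩ := hUbdd
  obtain rfl : k₀ = matsubaraFreq β := funext hk₀
  obtain rfl : term = fun n => ∫ k : EuclideanSpace ℝ (Fin 2),
      tadpoleIntegrand U (matsubaraFreq β n) (‖k‖ ^ 2 - 1) := funext hterm
  refine ⟨fun n => integrable_tadpoleIntegrand volume hUmeas hM hUsupp
    (matsubaraFreq_ne_zero hβ.ne' n), ?_, ?_⟩
  · refine (finite_setOf_abs_matsubaraFreq_le hβ.ne' 1).subset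
      fun n hn => show |matsubaraFreq β n| ≤ 1 from not_lt.1 fun hlarge => hn ?_
    have hzero (t : ℝ) : tadpoleIntegrand U (matsubaraFreq β n) t = 0 :=
      tadpoleIntegrand_eq_zero hUsupp (by nlinarith [sq_abs (matsubaraFreq β n)])
    simp [hzero]
  · rw [tsum_eq_zero_of_apply_equiv_eq_neg (Equiv.subLeft (-1)) fun n => ?_, mul_zero]
    rw [eq_neg_iff_add_eq_zero, Equiv.subLeft_apply, matsubaraFreq_neg_one_sub]
    exact integral_tadpoleIntegrand_neg_add volume hUmeas hM hUsupp (by simp)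
      (matsubaraFreq_ne_zero hβ.ne' n)
end

section
/- Let H be an inner product space over ℂ, let n ∈ ℕ, and let f, g : Fin n → H. Let M be the n × n matrix with entries M i j = ⟨f i, g j⟩. Then |det M| ≤ (∏_{i} ‖f i‖) · (∏_{j} ‖g j‖). -/
/-!
If the `g j` are linearly dependent, so are the columns of `M` and `det M = 0`. Otherwise
project the `f i` onto the `n`-dimensional span `V` of the `g j`, which changes no entry of `M`.
In an orthonormal basis of `V` we get `M = Aᴴ * B`, with `A` and `B` the coordinate matrices of
the projected `f i` and of the `g j`, and Hadamard's inequality bounds `|det A|` and `|det B|`.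
Hadamard's inequality itself holds because in the Gram–Schmidt basis built from the columns the
coordinate matrix is upper triangular with diagonal entries `⟪e i, v i⟫`, and the change to any
other orthonormal basis is unitary.
-/

open Matrix Module Submodule InnerProductSpace

section

variable {𝕜 E ι : Type*} [RCLike 𝕜] [NormedAddCommGroup E] [InnerProductSpace 𝕜 E]
  [Fintype ι] [DecidableEq ι]

theorem OrthonormalBasis.norm_det_le_prod_norm_of_fin {n : ℕ} (b : OrthonormalBasis (Fin n) 𝕜 E)
    (v : Fin n → E) : ‖b.toBasis.det v‖ ≤ ∏ i, ‖v i‖ := by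
  have : FiniteDimensional 𝕜 E := b.toBasis.finiteDimensional_of_finite
  have hdim : finrank 𝕜 E = Fintype.card (Fin n) := finrank_eq_card_basis b.toBasis
  set b' := gramSchmidtOrthonormalBasis hdim v
  have hchange : b.toBasis.det v = b.toBasis.det b' * b'.toBasis.det v := by
    rw [Basis.det_apply, ← b.toBasis.toMatrix_mul_toMatrix b'.toBasis, det_mul, ← Basis.det_apply,
      ← Basis.det_apply, b'.coe_toBasis]
  rw [hchange, norm_mul, b.det_to_matrix_orthonormalBasis, one_mul,
    gramSchmidtOrthonormalBasis_det, norm_prod]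
  gcongr with i
  simpa [b'.orthonormal.1 i] using norm_inner_le_norm (𝕜 := 𝕜) (b' i) (v i)

theorem OrthonormalBasis.norm_det_le_prod_norm (b : OrthonormalBasis ι 𝕜 E) (v : ι → E) :
    ‖b.toBasis.det v‖ ≤ ∏ i, ‖v i‖ := by
  let e := Fintype.equivFin ι
  have := (b.reindex e).norm_det_le_prod_norm_of_fin (v ∘ e.symm)
  rwa [OrthonormalBasis.reindex_toBasis, Basis.det_reindex, Function.comp_assoc,
    e.symm_comp_self, Function.comp_id,
    Fintype.prod_equiv e.symm (fun i => ‖(v ∘ e.symm) i‖) (fun i => ‖v i‖) fun _ => rfl] at this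

theorem OrthonormalBasis.det_inner_eq (b : OrthonormalBasis ι 𝕜 E) (u v : ι → E) :
    (of fun i j => ⟪u i, v j⟫_𝕜).det = star (b.toBasis.det u) * b.toBasis.det v := by
  have hfactor : (of fun i j => ⟪u i, v j⟫_𝕜) = (b.toBasis.toMatrix u)ᴴ * b.toBasis.toMatrix v := by
    ext i j
    simp [mul_apply, Basis.toMatrix_apply, b.repr_apply_apply, b.sum_inner_mul_inner]
  rw [hfactor, det_mul, det_conjTranspose, Basis.det_apply, Basis.det_apply]

theorem OrthonormalBasis.norm_det_inner_le (b : OrthonormalBasis ι 𝕜 E) (u v : ι → E) :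
    ‖(of fun i j => ⟪u i, v j⟫_𝕜).det‖ ≤ (∏ i, ‖u i‖) * ∏ j, ‖v j‖ := by
  rw [b.det_inner_eq, norm_mul, norm_star]
  gcongr <;> exact b.norm_det_le_prod_norm _

theorem det_inner_eq_zero_of_not_linearIndependent (u : ι → E) {v : ι → E}
    (hv : ¬LinearIndependent 𝕜 v) : (of fun i j => ⟪u i, v j⟫_𝕜).det = 0 := by
  obtain ⟨c, hc, j, hj⟩ := Fintype.not_linearIndependent_iff.mp hv
  refine exists_mulVec_eq_zero_iff.mp ⟨c, fun h => hj (congrFun h j), ?_⟩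
  ext i
  simp only [mulVec, dotProduct, of_apply, Pi.zero_apply, mul_comm _ (c _), ← inner_smul_right,
    ← inner_sum, hc, inner_zero_right]

theorem norm_det_inner_le (u v : ι → E) :
    ‖(of fun i j => ⟪u i, v j⟫_𝕜).det‖ ≤ (∏ i, ‖u i‖) * ∏ j, ‖v j‖ := by
  by_cases hv : LinearIndependent 𝕜 v
  swap
  · rw [det_inner_eq_zero_of_not_linearIndependent u hv, norm_zero]
    positivity
  let V := span 𝕜 (Set.range v)
  have : FiniteDimensional 𝕜 V := FiniteDimensional.span_of_finite 𝕜 (Set.finite_range v)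
  have hdim : finrank 𝕜 V = Fintype.card ι := finrank_span_eq_card hv
  let b : OrthonormalBasis ι 𝕜 V :=
    (stdOrthonormalBasis 𝕜 V).reindex (Fintype.equivOfCardEq (by simp [hdim]))
  let u' i := V.orthogonalProjectionOnto (u i)
  let v' j : V := ⟨v j, subset_span (Set.mem_range_self j)⟩
  have hproj : (of fun i j => ⟪u i, v j⟫_𝕜) = of fun i j => ⟪u' i, v' j⟫_𝕜 := by
    ext; simp [u', v']
  calc _ ≤ (∏ i, ‖u' i‖) * ∏ j, ‖v' j‖ := hproj ▸ b.norm_det_inner_le u' v'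
    _ ≤ _ := by
      gcongr with i
      · exact V.norm_orthogonalProjectionOnto_apply_le (u i)
      · rfl

end

/-- Gram's inequality: the determinant of a matrix of scalar products of vectors in a
complex inner product space is bounded by the product of the norms of the vectors. -/
theorem stmt4 {H : Type*} [NormedAddCommGroup H] [InnerProductSpace ℂ H]
    (n : ℕ) (f g : Fin n → H)
    (M : Matrix (Fin n) (Fin n) ℂ)
    (hM : ∀ i j, M i j = inner ℂ (f i) (g j)) :
    ‖M.det‖ ≤ (∏ i, ‖f i‖) * (∏ j, ‖g j‖) := by
  rw [show M = of fun i j => ⟪f i, g j⟫_ℂ from Matrix.ext hM]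
  exact norm_det_inner_le f g
end

section
/- For every s ≥ 1 and every t ≥ 1 there exists a natural number n such that t^{-n} · (n/e)^{n·s} ≤ e^{2s} · exp(- s · t^{1/s}). -/
/-! With `u = t^{1/s}` we have `t = u^s`, so `t^{-x} (x/e)^{xs} = (x/(e u))^{xs}`. For `x ≤ u` the
base is at most `1/e`, giving the bound `exp(-s x)`; taking `x = ⌊u⌋` loses at most `s` in the
exponent, since `u - ⌊u⌋ < 1`. -/

open Real

lemma rpow_neg_mul_div_exp_rpow_eq {s t x : ℝ} (hs : s ≠ 0) (ht : 0 < t) (hx : 0 ≤ x) :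
    t ^ (-x) * (x / exp 1) ^ (x * s) = (x / (exp 1 * t ^ (1 / s))) ^ (x * s) := by
  have hu : 0 < t ^ (1 / s) := rpow_pos_of_pos ht _
  have ht_eq : t = (t ^ (1 / s)) ^ s := by
    rw [← rpow_mul ht.le, one_div_mul_cancel hs, rpow_one]
  have h_neg : t ^ (-x) = ((t ^ (1 / s))⁻¹) ^ (x * s) := by
    conv_lhs => rw [ht_eq]
    rw [← rpow_mul hu.le, inv_rpow hu.le, ← rpow_neg hu.le]
    ring_nf
  rw [h_neg, ← mul_rpow (inv_nonneg.2 hu.le) (by positivity)]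
  congr 1
  field_simp

lemma rpow_neg_mul_div_exp_rpow_le {s t x : ℝ} (hs : 0 < s) (ht : 0 < t) (hx : 0 ≤ x)
    (hxu : x ≤ t ^ (1 / s)) :
    t ^ (-x) * (x / exp 1) ^ (x * s) ≤ exp (-(s * x)) := by
  have hu : 0 < t ^ (1 / s) := rpow_pos_of_pos ht _
  have h_base : x / (exp 1 * t ^ (1 / s)) ≤ exp (-1) := by
    rw [div_le_iff₀ (by positivity), exp_neg, ← mul_assoc, inv_mul_cancel₀ (exp_pos 1).ne',
      one_mul]
    exact hxu
  calc t ^ (-x) * (x / exp 1) ^ (x * s)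
      = (x / (exp 1 * t ^ (1 / s))) ^ (x * s) := rpow_neg_mul_div_exp_rpow_eq hs.ne' ht hx
    _ ≤ exp (-1) ^ (x * s) := rpow_le_rpow (by positivity) h_base (by positivity)
    _ = exp (-(s * x)) := by rw [← exp_mul]; ring_nf

/-- Optimization over the order of derivation in the Gevrey decay lemmas: for `s ≥ 1`
and `t ≥ 1` there is an `n` with `t^{-n} (n/e)^{ns} ≤ e^{2s} exp(-s t^{1/s})`. -/
theorem stmt10 (s t : ℝ) (hs : 1 ≤ s) (ht : 1 ≤ t) :
    ∃ n : ℕ, t ^ (-(n : ℝ)) * ((n : ℝ) / Real.exp 1) ^ ((n : ℝ) * s) ≤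
      Real.exp (2 * s) * Real.exp (-s * t ^ (1 / s)) := by
  have hs0 : 0 < s := by linarith
  set u := t ^ (1 / s)
  have hu : 0 ≤ u := rpow_nonneg (by linarith) _
  refine ⟨⌊u⌋₊, ?_⟩
  have h_floor : u < ⌊u⌋₊ + 1 := Nat.lt_floor_add_one u
  calc t ^ (-(⌊u⌋₊ : ℝ)) * ((⌊u⌋₊ : ℝ) / exp 1) ^ ((⌊u⌋₊ : ℝ) * s)
      ≤ exp (-(s * ⌊u⌋₊)) :=
        rpow_neg_mul_div_exp_rpow_le hs0 (by linarith) (Nat.cast_nonneg _) (Nat.floor_le hu)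
    _ ≤ exp (2 * s) * exp (-s * u) := by
        rw [← exp_add]
        exact exp_le_exp.2 (by nlinarith)
end
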